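/- Let f : ℝ^d → ℝ have M-Lipschitz gradient, let θ ∈ ℝ^d satisfy ‖∇f(θ)‖ ≤ R, let u ∼ N(0, I_d), and set φ(ν, u) = (f(θ + νu) − f(θ))/ν. If ν ≤ R/(M·‖u‖_{Ψ₂}), then the sub-exponential norm of φ(ν, u) satisfies ‖φ(ν, u)‖_{Ψ₁} ≤ 2R·‖u‖_{Ψ₂}. -/

import Mathlib

/-!
Expanding `f` to second order around `θ` with the Lipschitz bound on `∇f` (the descent lemma)
gives the pointwise bound `|φ(ν, u)| ≤ R‖u‖ + (Mν/2)‖u‖²`. By Minkowski's inequality the `L^p` norm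
of `φ(ν, u)` is then at most `R‖u‖_p + (Mν/2)‖u‖_{2p}² ≤ R√p K + Mν p K²`, where `K = ‖u‖_{Ψ₂}`;
dividing by `p` and using `MνK ≤ R` bounds it by `2RK`. That `K` is finite at all follows from
Fernique's theorem: `exp (c‖u‖²)` is integrable for some `c > 0`, and
`t^q ≤ (q/(2c))^{q/2} e^{ct²}`.
-/

open MeasureTheory ProbabilityTheory Real
open scoped ENNReal NNReal RealInnerProductSpace

noncomputable section

/-- `ℝ^d` with the Euclidean structure. -/
abbrev Euc (d : ℕ) := EuclideanSpace ℝ (Fin d)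

/-- Standard Gaussian measure `N(0, I_d)` on `ℝ^d`. -/
def stdGaussian (d : ℕ) : Measure (Euc d) :=
  (Measure.pi fun _ : Fin d => gaussianReal 0 1).map
    (MeasurableEquiv.toLp 2 (Fin d → ℝ))

/-- The sub-exponential norm `‖X‖_{Ψ₁} = sup_{p ≥ 1} p⁻¹ E[|X|^p]^{1/p}`. -/
def subExpNorm {α : Type*} [MeasurableSpace α] (μ : Measure α) (X : α → ℝ) : ℝ :=
  ⨆ p : {p : ℝ // 1 ≤ p}, ((p : ℝ))⁻¹ * (∫ x, |X x| ^ (p : ℝ) ∂μ) ^ ((p : ℝ))⁻¹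

/-- The sub-Gaussian norm `‖X‖_{Ψ₂} = sup_{p ≥ 1} p^{-1/2} E[|X|^p]^{1/p}`. -/
def subGaussNorm {α : Type*} [MeasurableSpace α] (μ : Measure α) (X : α → ℝ) : ℝ :=
  ⨆ p : {p : ℝ // 1 ≤ p},
    ((p : ℝ)) ^ (-(1 / 2 : ℝ)) * (∫ x, |X x| ^ (p : ℝ) ∂μ) ^ ((p : ℝ))⁻¹

section Descent

variable {E : Type*} [NormedAddCommGroup E] [InnerProductSpace ℝ E] [CompleteSpace E]
  {f : E → ℝ} {f' : E → E} {M : ℝ}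

theorem abs_sub_sub_inner_le_of_lipschitz_gradient (hgrad : ∀ x, HasGradientAt f (f' x) x)
    (hlip : ∀ x y, ‖f' x - f' y‖ ≤ M * ‖x - y‖) (x v : E) :
    |f (x + v) - f x - ⟪f' x, v⟫| ≤ M / 2 * ‖v‖ ^ 2 := by
  set g : ℝ → ℝ := fun t => f (x + t • v) - f x - t * ⟪f' x, v⟫
  have hg : ∀ t, HasDerivAt g ⟪f' (x + t • v) - f' x, v⟫ t := by
    intro t
    have hline : HasDerivAt (fun t : ℝ => x + t • v) v t := by
      simpa using ((hasDerivAt_id t).smul_const v).const_add x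
    have := (((hgrad _).hasFDerivAt.comp_hasDerivAt t hline).sub_const (f x)).sub
      ((hasDerivAt_id t).mul_const ⟪f' x, v⟫)
    simp only [InnerProductSpace.toDual_apply_apply, one_mul] at this
    rw [inner_sub_left]
    exact this
  have hB : ∀ t, HasDerivAt (fun t : ℝ => M / 2 * ‖v‖ ^ 2 * t ^ 2) (M * ‖v‖ ^ 2 * t) t :=
    fun t => ((hasDerivAt_pow 2 t).const_mul (M / 2 * ‖v‖ ^ 2)).congr_deriv (by
      simp only [Nat.cast_ofNat, Nat.add_one_sub_one, pow_one]; ring)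
  have hbound : ∀ t ∈ Set.Ico (0 : ℝ) 1, ‖⟪f' (x + t • v) - f' x, v⟫‖ ≤ M * ‖v‖ ^ 2 * t := by
    intro t ht
    calc ‖⟪f' (x + t • v) - f' x, v⟫‖ ≤ ‖f' (x + t • v) - f' x‖ * ‖v‖ := norm_inner_le_norm _ _
      _ ≤ M * ‖x + t • v - x‖ * ‖v‖ := by gcongr; exact hlip _ _
      _ = M * ‖v‖ ^ 2 * t := by
        rw [add_sub_cancel_left, norm_smul, Real.norm_of_nonneg ht.1]; ring
  have := image_norm_le_of_norm_deriv_right_le_deriv_boundary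
    (fun t _ => (hg t).continuousAt.continuousWithinAt) (fun t _ => (hg t).hasDerivWithinAt)
    (by simp [g]) hB hbound (Set.right_mem_Icc.2 zero_le_one)
  simpa [g] using this

theorem abs_sub_div_le_of_lipschitz_gradient (hgrad : ∀ x, HasGradientAt f (f' x) x)
    (hlip : ∀ x y, ‖f' x - f' y‖ ≤ M * ‖x - y‖) (x u : E) {ν : ℝ} (hν : 0 < ν) :
    |(f (x + ν • u) - f x) / ν| ≤ ‖f' x‖ * ‖u‖ + M * ν / 2 * ‖u‖ ^ 2 := by
  have hνu : ‖ν • u‖ = ν * ‖u‖ := by rw [norm_smul, Real.norm_of_nonneg hν.le]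
  have hrem := hνu ▸ abs_sub_sub_inner_le_of_lipschitz_gradient hgrad hlip x (ν • u)
  have hlin : |⟪f' x, ν • u⟫| ≤ ‖f' x‖ * (ν * ‖u‖) := hνu ▸ abs_real_inner_le_norm _ _
  rw [abs_div, abs_of_pos hν, div_le_iff₀ hν]
  calc |f (x + ν • u) - f x|
      ≤ |f (x + ν • u) - f x - ⟪f' x, ν • u⟫| + |⟪f' x, ν • u⟫| := by
        linarith [abs_sub_abs_le_abs_sub (f (x + ν • u) - f x) ⟪f' x, ν • u⟫]
    _ ≤ M / 2 * (ν * ‖u‖) ^ 2 + ‖f' x‖ * (ν * ‖u‖) := add_le_add hrem hlin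
    _ = (‖f' x‖ * ‖u‖ + M * ν / 2 * ‖u‖ ^ 2) * ν := by ring

end Descent

lemma rpow_le_rpow_mul_exp {s a : ℝ} (hs : 0 ≤ s) (ha : 0 < a) : s ^ a ≤ a ^ a * exp s := by
  have h : (s / a) ^ a ≤ exp s :=
    calc (s / a) ^ a ≤ exp (s / a) ^ a := by
          gcongr; linarith [Real.add_one_le_exp (s / a)]
      _ = exp s := by rw [← Real.exp_mul, div_mul_cancel₀ _ ha.ne']
  calc s ^ a = a ^ a * (s / a) ^ a := by
        rw [Real.div_rpow hs ha.le, mul_div_cancel₀ _ (by positivity)]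
    _ ≤ a ^ a * exp s := by gcongr

lemma abs_rpow_le_mul_exp_mul_sq {c q : ℝ} (hc : 0 < c) (hq : 0 < q) (x : ℝ) :
    |x| ^ q ≤ (q / (2 * c)) ^ (q / 2) * exp (c * x ^ 2) := by
  calc |x| ^ q = (c * x ^ 2) ^ (q / 2) / c ^ (q / 2) := by
        rw [Real.mul_rpow hc.le (sq_nonneg x), ← sq_abs, ← Real.rpow_natCast,
          ← Real.rpow_mul (abs_nonneg x)]
        field_simp
        norm_num
    _ ≤ (q / 2) ^ (q / 2) * exp (c * x ^ 2) / c ^ (q / 2) := by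
        gcongr
        exact rpow_le_rpow_mul_exp (by positivity) (by positivity)
    _ = (q / (2 * c)) ^ (q / 2) * exp (c * x ^ 2) := by
        rw [mul_div_right_comm, ← Real.div_rpow (by positivity) hc.le, div_div]

/-- `E[|X|^p]^{1/p}`. Through the Bochner integral it is `0`, not `∞`, when `|X|^p` is not
integrable, hence the `MemLp` hypotheses below. -/
def momentNorm {α : Type*} [MeasurableSpace α] (μ : Measure α) (X : α → ℝ) (p : ℝ) : ℝ :=
  (∫ x, |X x| ^ p ∂μ) ^ p⁻¹

/-- `subGaussNorm` is a real `iSup`, which takes the junk value `0` on an unbounded family; this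
is the condition under which it is the true supremum. -/
def HasFiniteSubGaussNorm {α : Type*} [MeasurableSpace α] (μ : Measure α) (X : α → ℝ) : Prop :=
  BddAbove (Set.range fun p : {p : ℝ // 1 ≤ p} => (p : ℝ) ^ (-(1 / 2 : ℝ)) * momentNorm μ X p)

section Moments

variable {α : Type*} [MeasurableSpace α] {μ : Measure α} {X Y : α → ℝ} {p : ℝ}

lemma momentNorm_nonneg : 0 ≤ momentNorm μ X p :=
  Real.rpow_nonneg (integral_nonneg fun _ => by positivity) _

lemma momentNorm_const_mul (c : ℝ) (hp : 0 < p) :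
    momentNorm μ (fun x => c * X x) p = |c| * momentNorm μ X p := by
  simp only [momentNorm, abs_mul, Real.mul_rpow (abs_nonneg _) (abs_nonneg _), integral_const_mul]
  rw [Real.mul_rpow (by positivity) (integral_nonneg fun _ => by positivity),
    Real.rpow_rpow_inv (abs_nonneg _) hp.ne']

lemma momentNorm_sq (hp : 0 < p) :
    momentNorm μ (fun x => X x ^ 2) p = momentNorm μ X (2 * p) ^ 2 := by
  have hI : 0 ≤ ∫ x, |X x| ^ (2 * p) ∂μ := integral_nonneg fun _ => by positivity
  simp only [momentNorm, abs_pow]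
  simp_rw [← Real.rpow_natCast, ← Real.rpow_mul (abs_nonneg _), ← Real.rpow_mul hI]
  congr 1
  field_simp
  norm_num

lemma momentNorm_eq_toReal_eLpNorm (hX : MemLp X (ENNReal.ofReal p) μ) (hp : 0 < p) :
    momentNorm μ X p = (eLpNorm X (ENNReal.ofReal p) μ).toReal := by
  rw [hX.eLpNorm_eq_integral_rpow_norm (by simpa using hp) ENNReal.ofReal_ne_top,
    ENNReal.toReal_ofReal hp.le]
  exact (ENNReal.toReal_ofReal momentNorm_nonneg).symm

lemma momentNorm_le_add {g h : α → ℝ} (hp : 1 ≤ p) (hY : AEStronglyMeasurable Y μ)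
    (hg : MemLp g (ENNReal.ofReal p) μ) (hh : MemLp h (ENNReal.ofReal p) μ)
    (hdom : ∀ x, |Y x| ≤ |g x + h x|) :
    momentNorm μ Y p ≤ momentNorm μ g p + momentNorm μ h p := by
  have hp0 : 0 < p := zero_lt_one.trans_le hp
  have hYgh : eLpNorm Y (ENNReal.ofReal p) μ ≤ eLpNorm (g + h) (ENNReal.ofReal p) μ :=
    eLpNorm_mono hdom
  have hY' : MemLp Y (ENNReal.ofReal p) μ := (hg.add hh).of_le hY (ae_of_all _ hdom)
  rw [momentNorm_eq_toReal_eLpNorm hY' hp0, momentNorm_eq_toReal_eLpNorm hg hp0,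
    momentNorm_eq_toReal_eLpNorm hh hp0,
    ← ENNReal.toReal_add hg.eLpNorm_ne_top hh.eLpNorm_ne_top]
  refine ENNReal.toReal_mono (by finiteness) (hYgh.trans (eLpNorm_add_le hg.1 hh.1 ?_))
  exact ENNReal.one_le_ofReal.2 hp

lemma subGaussNorm_nonneg : 0 ≤ subGaussNorm μ X :=
  Real.iSup_nonneg fun p =>
    mul_nonneg (Real.rpow_nonneg (zero_le_one.trans p.2) _) momentNorm_nonneg

lemma HasFiniteSubGaussNorm.momentNorm_le (hX : HasFiniteSubGaussNorm μ X) (hp : 1 ≤ p) :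
    momentNorm μ X p ≤ √p * subGaussNorm μ X := by
  have hp0 : 0 < p := zero_lt_one.trans_le hp
  calc momentNorm μ X p = √p * (p ^ (-(1 / 2 : ℝ)) * momentNorm μ X p) := by
        rw [← mul_assoc, Real.sqrt_eq_rpow, ← Real.rpow_add hp0]; norm_num
    _ ≤ √p * subGaussNorm μ X := by gcongr; exact le_ciSup hX ⟨p, hp⟩

lemma memLp_sq_of_memLp_two_mul (hX : MemLp X (ENNReal.ofReal (2 * p)) μ) :
    MemLp (fun x => X x ^ 2) (ENNReal.ofReal p) μ := by
  convert hX.norm_rpow_div 2 using 1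
  · ext x
    simp [sq_abs]
  · rw [← ENNReal.ofReal_ofNat 2, ← ENNReal.ofReal_div_of_pos two_pos,
      mul_div_cancel_left₀ _ two_ne_zero]

theorem hasFiniteSubGaussNorm_of_integrable_exp_mul_sq [IsProbabilityMeasure μ] {c : ℝ}
    (hc : 0 < c) (hexp : Integrable (fun x => exp (c * X x ^ 2)) μ) :
    HasFiniteSubGaussNorm μ X := by
  set C := ∫ x, exp (c * X x ^ 2) ∂μ
  have hC : 1 ≤ C := by
    simpa using integral_mono (integrable_const 1) hexp fun x => Real.one_le_exp (by positivity)
  refine ⟨C / √(2 * c), ?_⟩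
  rintro _ ⟨⟨q, hq⟩, rfl⟩
  have hq0 : 0 < q := zero_lt_one.trans_le hq
  have hint : ∫ x, |X x| ^ q ∂μ ≤ (q / (2 * c)) ^ (q / 2) * C := by
    rw [← integral_const_mul]
    exact integral_mono_of_nonneg (ae_of_all _ fun _ => by positivity) (hexp.const_mul _)
      (ae_of_all _ fun x => abs_rpow_le_mul_exp_mul_sq hc hq0 (X x))
  have hmom : momentNorm μ X q ≤ √(q / (2 * c)) * C :=
    calc momentNorm μ X q ≤ ((q / (2 * c)) ^ (q / 2) * C) ^ q⁻¹ :=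
          Real.rpow_le_rpow (integral_nonneg fun _ => by positivity) hint (by positivity)
      _ = √(q / (2 * c)) * C ^ q⁻¹ := by
          rw [Real.mul_rpow (by positivity) (by positivity), ← Real.rpow_mul (by positivity),
            Real.sqrt_eq_rpow]
          congr 2
          field_simp
      _ ≤ √(q / (2 * c)) * C := by
          gcongr
          exact Real.rpow_le_self_of_one_le hC (inv_le_one_of_one_le₀ hq)
  calc q ^ (-(1 / 2 : ℝ)) * momentNorm μ X q ≤ q ^ (-(1 / 2 : ℝ)) * (√(q / (2 * c)) * C) := by
        gcongr
    _ = C / √(2 * c) := by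
        rw [Real.rpow_neg hq0.le, ← Real.sqrt_eq_rpow, Real.sqrt_div' _ (by positivity)]
        field_simp

theorem subExpNorm_le_of_abs_le {a b : ℝ} (hX : HasFiniteSubGaussNorm μ X)
    (hXp : ∀ q : ℝ≥0∞, q ≠ ∞ → MemLp X q μ) (hY : AEStronglyMeasurable Y μ) (ha : 0 ≤ a)
    (hb : 0 ≤ b) (hdom : ∀ x, |Y x| ≤ a * X x + b * X x ^ 2) :
    subExpNorm μ Y ≤ a * subGaussNorm μ X + 2 * b * subGaussNorm μ X ^ 2 := by
  set K := subGaussNorm μ X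
  refine ciSup_le fun ⟨p, hp⟩ => ?_
  change p⁻¹ * momentNorm μ Y p ≤ _
  have hp0 : 0 < p := zero_lt_one.trans_le hp
  have hmom : momentNorm μ Y p ≤ a * (√p * K) + b * (2 * p * K ^ 2) :=
    calc momentNorm μ Y p
        ≤ momentNorm μ (fun x => a * X x) p + momentNorm μ (fun x => b * X x ^ 2) p :=
          momentNorm_le_add hp hY ((hXp _ ENNReal.ofReal_ne_top).const_mul a)
            ((memLp_sq_of_memLp_two_mul (hXp _ ENNReal.ofReal_ne_top)).const_mul b)
            fun x => (hdom x).trans (le_abs_self _)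
      _ = a * momentNorm μ X p + b * momentNorm μ X (2 * p) ^ 2 := by
          rw [momentNorm_const_mul a hp0, momentNorm_const_mul b hp0, momentNorm_sq hp0,
            abs_of_nonneg ha, abs_of_nonneg hb]
      _ ≤ a * (√p * K) + b * (√(2 * p) * K) ^ 2 := by
          gcongr
          · exact hX.momentNorm_le hp
          · exact momentNorm_nonneg
          · exact hX.momentNorm_le (by linarith)
      _ = a * (√p * K) + b * (2 * p * K ^ 2) := by
          rw [mul_pow, Real.sq_sqrt (by positivity)]
  have hsqrt : √p / p ≤ 1 :=
    div_le_one_of_le₀ (Real.sqrt_le_self_iff.2 (Or.inr hp)) hp0.le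
  have hK : 0 ≤ K := subGaussNorm_nonneg
  calc p⁻¹ * momentNorm μ Y p ≤ p⁻¹ * (a * (√p * K) + b * (2 * p * K ^ 2)) := by
        gcongr
    _ = a * K * (√p / p) + 2 * b * K ^ 2 := by field_simp
    _ ≤ a * K * 1 + 2 * b * K ^ 2 := by gcongr
    _ = a * K + 2 * b * K ^ 2 := by ring

end Moments

theorem hasFiniteSubGaussNorm_norm_of_isGaussian {E : Type*} [NormedAddCommGroup E]
    [NormedSpace ℝ E] [CompleteSpace E] [SecondCountableTopology E] [MeasurableSpace E]
    [BorelSpace E] (μ : Measure E) [IsGaussian μ] : HasFiniteSubGaussNorm μ (fun x => ‖x‖) := by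
  obtain ⟨c, hc, hexp⟩ := IsGaussian.exists_integrable_exp_sq μ
  exact hasFiniteSubGaussNorm_of_integrable_exp_mul_sq hc hexp

lemma stdGaussian_eq_stdGaussian_euclideanSpace (d : ℕ) :
    stdGaussian d = ProbabilityTheory.stdGaussian (Euc d) :=
  map_pi_eq_stdGaussian

instance (d : ℕ) : IsGaussian (stdGaussian d) :=
  stdGaussian_eq_stdGaussian_euclideanSpace d ▸ inferInstance

theorem zo_finite_difference_subexponential_general
    (d : ℕ) (M R ν : ℝ) (hM : 0 < M) (hR : 0 < R) (hν : 0 < ν)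
    (f : Euc d → ℝ) (f' : Euc d → Euc d)
    (hgrad : ∀ θ, HasGradientAt f (f' θ) θ)
    (hlip : ∀ θ θ' : Euc d, ‖f' θ - f' θ'‖ ≤ M * ‖θ - θ'‖)
    (θ : Euc d) (hθ : ‖f' θ‖ ≤ R)
    (hνbound : ν ≤ R / (M * subGaussNorm (stdGaussian d) (fun u => ‖u‖))) :
    subExpNorm (stdGaussian d) (fun u => (f (θ + ν • u) - f θ) / ν) ≤
      2 * R * subGaussNorm (stdGaussian d) (fun u => ‖u‖) := by
  set K := subGaussNorm (stdGaussian d) (fun u => ‖u‖)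
  have hK : 0 ≤ K := subGaussNorm_nonneg
  have hMK : 0 < M * K := (div_pos_iff_of_pos_left hR).1 (hν.trans_le hνbound)
  have hMνK : M * ν * K ≤ R := by linarith [(le_div_iff₀ hMK).1 hνbound]
  have hf : Continuous f := Differentiable.continuous fun x => (hgrad x).differentiableAt
  calc subExpNorm (stdGaussian d) (fun u => (f (θ + ν • u) - f θ) / ν)
      ≤ ‖f' θ‖ * K + 2 * (M * ν / 2) * K ^ 2 :=
        subExpNorm_le_of_abs_le (hasFiniteSubGaussNorm_norm_of_isGaussian _)
          (fun q hq => (IsGaussian.memLp_id _ q hq).norm) (by fun_prop) (norm_nonneg _)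
          (by positivity) (abs_sub_div_le_of_lipschitz_gradient hgrad hlip θ · hν)
    _ ≤ R * K + R * K := by
        nlinarith [mul_le_mul_of_nonneg_right hθ hK, mul_le_mul_of_nonneg_right hMνK hK]
    _ = 2 * R * K := by ring

/-- sub-exponential norm of the zeroth-order finite difference.
If `∇f` is `M`-Lipschitz, `‖∇f(θ)‖ ≤ R`, `u ∼ N(0, I_d)`,
`φ(ν, u) = (f(θ + νu) - f(θ))/ν`, and `ν ≤ R/(M ‖u‖_{Ψ₂})`, then
`‖φ(ν, u)‖_{Ψ₁} ≤ 2R ‖u‖_{Ψ₂}`. -/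
theorem zo_finite_difference_subexponential
    (d : ℕ) (hd : 1 ≤ d) (M R ν : ℝ) (hM : 0 < M) (hR : 0 < R) (hν : 0 < ν)
    (f : Euc d → ℝ) (f' : Euc d → Euc d)
    (hgrad : ∀ θ, HasGradientAt f (f' θ) θ)
    (hlip : ∀ θ θ' : Euc d, ‖f' θ - f' θ'‖ ≤ M * ‖θ - θ'‖)
    (θ : Euc d) (hθ : ‖f' θ‖ ≤ R)
    (hνbound : ν ≤ R / (M * subGaussNorm (stdGaussian d) (fun u => ‖u‖))) :
    subExpNorm (stdGaussian d) (fun u => (f (θ + ν • u) - f θ) / ν) ≤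
      2 * R * subGaussNorm (stdGaussian d) (fun u => ‖u‖) :=
  zo_finite_difference_subexponential_general d M R ν hM hR hν f f' hgrad hlip θ hθ hνbound
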